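/- Let X be an mm-space and let C, c > 0. If Sep(X; κ, κ) ≤ (1/C)·log(c/κ) for every κ > 0, then the concentration function satisfies α_X(r) ≤ c·exp(−C r) for every r > 0. -/
import Mathlib

open MeasureTheory Metric

/-- The distance between two subsets of a metric space:
`dist(A,B) = inf { dist a b | a ∈ A, b ∈ B }` (with `sInf ∅ = 0`). -/
noncomputable def setDist {X : Type*} [PseudoMetricSpace X] (A B : Set X) : ℝ :=
  sInf (Set.image2 dist A B)

/-- The separation distance `Sep(X; κ₀, …, κ_k)` of a metric measure space:
the supremum of `min_{i ≠ j} dist(A_i, A_j)` over all tuples of Borel sets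
`A₀, …, A_k` with `μ (A i) ≥ κ i` (with `sSup ∅ = 0`). -/
noncomputable def sep {X : Type*} [MetricSpace X] [MeasurableSpace X]
    (μ : Measure X) {k : ℕ} (κ : Fin (k + 1) → ℝ) : ℝ :=
  sSup { r | ∃ A : Fin (k + 1) → Set X, (∀ i, MeasurableSet (A i)) ∧
    (∀ i, κ i ≤ (μ (A i)).toReal) ∧
    r = sInf { d | ∃ i j, i ≠ j ∧ d = setDist (A i) (A j) } }

/-- The concentration function `α_X(r)`: the supremum of `μ (X \ O_r(A))` over
all Borel sets `A` with `μ A ≥ 1/2`, where `O_r(A)` is the open `r`-neighborhood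
of `A`. -/
noncomputable def concFn {X : Type*} [PseudoMetricSpace X] [MeasurableSpace X]
    (μ : Measure X) (r : ℝ) : ℝ :=
  sSup { v | ∃ A : Set X, MeasurableSet A ∧ (1 : ℝ) / 2 ≤ (μ A).toReal ∧
    v = (μ (Metric.thickening r A)ᶜ).toReal }

lemma setDist_nonneg' {X : Type*} [PseudoMetricSpace X] (A B : Set X) :
    0 ≤ setDist A B :=
  Real.sInf_nonneg (by rintro d ⟨a, _, b, _, rfl⟩; exact dist_nonneg)

/-- The set defining `sep` is bounded above for positive thresholds. -/
lemma sep_bddAbove {X : Type*} [MetricSpace X] [MeasurableSpace X] [BorelSpace X]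
    (μ : Measure X) [IsProbabilityMeasure μ] (κ : ℝ) (hκ : 0 < κ) :
    BddAbove { r | ∃ A : Fin 2 → Set X, (∀ i, MeasurableSet (A i)) ∧
      (∀ i, κ ≤ (μ (A i)).toReal) ∧
      r = sInf { d | ∃ i j, i ≠ j ∧ d = setDist (A i) (A j) } } := by
  have hX : Nonempty X := by
    by_contra h
    rw [not_nonempty_iff] at h
    have : μ Set.univ = 1 := measure_univ
    simp [Set.univ_eq_empty_iff.mpr h] at this
  obtain ⟨x₀⟩ := hX
  have htend : Filter.Tendsto (fun n : ℕ => μ (ball x₀ (n : ℝ))ᶜ) Filter.atTop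
      (nhds (μ (⋂ n : ℕ, (ball x₀ (n : ℝ))ᶜ))) := by
    apply tendsto_measure_iInter_atTop
      (fun n => (measurableSet_ball.compl).nullMeasurableSet)
      (fun m n hmn => Set.compl_subset_compl.mpr (Metric.ball_subset_ball (by exact_mod_cast hmn)))
      ⟨0, measure_ne_top μ _⟩
  have hempty : (⋂ n : ℕ, (ball x₀ (n : ℝ))ᶜ) = ∅ := by
    ext x
    simp only [Set.mem_iInter, Set.mem_compl_iff, Metric.mem_ball, Set.mem_empty_iff_false,
      iff_false, not_forall, not_not]
    obtain ⟨n, hn⟩ := exists_nat_gt (dist x x₀)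
    exact ⟨n, hn⟩
  rw [hempty, measure_empty] at htend
  obtain ⟨n, hn⟩ := (htend.eventually_lt_const (ENNReal.ofReal_pos.mpr hκ)).exists
  refine ⟨(n : ℝ) + n, ?_⟩
  rintro v ⟨A, hmeas, hκ', rfl⟩
  have hpt : ∀ i, ∃ a ∈ A i, a ∈ ball x₀ (n : ℝ) := by
    intro i
    by_contra h
    push_neg at h
    have hsub : A i ⊆ (ball x₀ (n : ℝ))ᶜ := fun a ha => h a ha
    have h1 : ENNReal.ofReal κ ≤ μ (A i) := by
      calc ENNReal.ofReal κ ≤ ENNReal.ofReal (μ (A i)).toReal :=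
            ENNReal.ofReal_le_ofReal (hκ' i)
        _ = μ (A i) := ENNReal.ofReal_toReal (measure_ne_top μ _)
    exact absurd (h1.trans (measure_mono hsub)) (not_le.mpr hn)
  obtain ⟨a, ha, hab⟩ := hpt 0
  obtain ⟨b, hb, hbb⟩ := hpt 1
  have h01 : setDist (A 0) (A 1) ≤ dist a b :=
    csInf_le ⟨0, by rintro d ⟨x, _, y, _, rfl⟩; exact dist_nonneg⟩
      (Set.mem_image2_of_mem ha hb)
  have hd : dist a b ≤ (n : ℝ) + n := by
    calc dist a b ≤ dist a x₀ + dist x₀ b := dist_triangle _ _ _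
      _ ≤ (n : ℝ) + n := by
        rw [mem_ball] at hab hbb
        rw [dist_comm x₀ b]
        exact add_le_add hab.le hbb.le
  calc sInf { d | ∃ i j, i ≠ j ∧ d = setDist (A i) (A j) }
      ≤ setDist (A 0) (A 1) := csInf_le
        ⟨0, by rintro d ⟨i, j, _, rfl⟩; exact setDist_nonneg' _ _⟩
        ⟨0, 1, by decide, rfl⟩
    _ ≤ (n : ℝ) + n := h01.trans hd

/-- If `Sep(X; κ, κ) ≤ (1/C) log (c/κ)` for every `κ > 0`, then
the concentration function satisfies `α_X(r) ≤ c exp (-C r)` for every `r > 0`. -/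
theorem concentration_of_sep {X : Type*} [MetricSpace X] [CompleteSpace X]
    [TopologicalSpace.SeparableSpace X] [MeasurableSpace X] [BorelSpace X]
    (μ : Measure X) [IsProbabilityMeasure μ] (C c : ℝ) (hC : 0 < C) (hc : 0 < c)
    (hsep : ∀ κ : ℝ, 0 < κ → sep (k := 1) μ (fun _ => κ) ≤ (1 / C) * Real.log (c / κ)) :
    ∀ r : ℝ, 0 < r → concFn μ r ≤ c * Real.exp (-C * r) := by
  intro r hr
  have hbound : 0 < c * Real.exp (-C * r) := by positivity
  apply Real.sSup_le _ hbound.le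
  rintro v ⟨A, hA, hAhalf, rfl⟩
  by_contra hlt
  push_neg at hlt
  set B := (Metric.thickening r A)ᶜ with hB
  set κ := (μ B).toReal with hκdef
  have hκpos : 0 < κ := hbound.trans hlt
  -- κ ≤ 1/2 ≤ μ A
  have hsubT : A ⊆ Metric.thickening r A := Metric.self_subset_thickening hr A
  have hκhalf : κ ≤ 1 / 2 := by
    have h1 : μ B ≤ μ Aᶜ := measure_mono (Set.compl_subset_compl.mpr hsubT)
    have h2 : (μ Aᶜ).toReal = 1 - (μ A).toReal := by
      rw [measure_compl hA (measure_ne_top μ A), measure_univ,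
        ENNReal.toReal_sub_of_le prob_le_one ENNReal.one_ne_top, ENNReal.toReal_one]
    have h3 : κ ≤ (μ Aᶜ).toReal := ENNReal.toReal_mono (measure_ne_top μ _) h1
    linarith [h2 ▸ h3, hAhalf]
  -- nonemptiness
  have hAne : A.Nonempty := by
    rw [Set.nonempty_iff_ne_empty]
    rintro rfl
    simp at hAhalf
    linarith
  have hBne : B.Nonempty := by
    rw [Set.nonempty_iff_ne_empty]
    rintro h
    rw [h] at hκdef
    simp [hκdef] at hκpos
  -- r ≤ sep
  set F : Fin 2 → Set X := ![A, B] with hF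
  have hF0 : F 0 = A := rfl
  have hF1 : F 1 = B := rfl
  have hDge : ∀ d ∈ { d | ∃ i j, i ≠ j ∧ d = setDist (F i) (F j) }, r ≤ d := by
    rintro d ⟨i, j, hij, rfl⟩
    have key : ∀ a ∈ A, ∀ b ∈ B, r ≤ dist a b := by
      intro a ha b hb
      rw [Set.mem_compl_iff, Metric.mem_thickening_iff] at hb
      push_neg at hb
      rw [dist_comm]
      exact hb a ha
    fin_cases i <;> fin_cases j <;> first
      | exact absurd rfl hij
      | · apply le_csInf (Set.Nonempty.image2 hAne hBne)
          rintro d ⟨a, ha, b, hb, rfl⟩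
          exact key a ha b hb
      | · apply le_csInf (Set.Nonempty.image2 hBne hAne)
          rintro d ⟨b, hb, a, ha, rfl⟩
          rw [dist_comm]
          exact key a ha b hb
  have hmem : sInf { d | ∃ i j, i ≠ j ∧ d = setDist (F i) (F j) } ∈
      { s | ∃ A' : Fin 2 → Set X, (∀ i, MeasurableSet (A' i)) ∧
        (∀ i, κ ≤ (μ (A' i)).toReal) ∧
        s = sInf { d | ∃ i j, i ≠ j ∧ d = setDist (A' i) (A' j) } } := by
    refine ⟨F, ?_, ?_, rfl⟩
    · intro i
      fin_cases i
      · exact hA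
      · exact (Metric.isOpen_thickening).measurableSet.compl
    · intro i
      fin_cases i
      · exact hκhalf.trans hAhalf
      · exact le_refl _
  have hrle : r ≤ sep (k := 1) μ (fun _ => κ) := by
    have h1 : r ≤ sInf { d | ∃ i j, i ≠ j ∧ d = setDist (F i) (F j) } :=
      le_csInf ⟨setDist (F 0) (F 1), 0, 1, by decide, rfl⟩ hDge
    exact h1.trans (le_csSup (sep_bddAbove μ κ hκpos) hmem)
  have h2 : C * r ≤ Real.log (c / κ) := by
    have h := hrle.trans (hsep κ hκpos)
    calc C * r ≤ C * ((1 / C) * Real.log (c / κ)) := by nlinarith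
      _ = Real.log (c / κ) := by field_simp
  have h3 : Real.exp (C * r) ≤ c / κ := by
    have := Real.exp_le_exp.mpr h2
    rwa [Real.exp_log (div_pos hc hκpos)] at this
  have hE : 0 < Real.exp (C * r) := Real.exp_pos _
  have h4 : Real.exp (C * r) * κ ≤ c := by
    rw [← le_div_iff₀ hκpos]; exact h3
  have h5 : c * Real.exp (-C * r) = c / Real.exp (C * r) := by
    rw [neg_mul, Real.exp_neg, div_eq_mul_inv]
  rw [h5, div_lt_iff₀ hE] at hlt
  nlinarith
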